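/- Two finite argumentation frameworks F and G are expansion equivalent with respect to strong admissible sets (for all AFs H, sad(F ∪ H) = sad(G ∪ H)) if and only if their grounded kernels are equal: F^k(gr) = G^k(gr). -/

import Mathlib

structure AF where
  args : Finset ℕ
  att : Finset (ℕ × ℕ)
  att_sub : att ⊆ args ×ˢ args

namespace AF

/-- S is conflict-free in F. -/
def cf (F : AF) (S : Set ℕ) : Prop :=
  S ⊆ ↑F.args ∧ ∀ a ∈ S, ∀ b ∈ S, (a, b) ∉ F.att

/-- the range S⁺ of S in F -/
def rng (F : AF) (S : Set ℕ) : Set ℕ :=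
  S ∪ {a | ∃ s ∈ S, (s, a) ∈ F.att}

/-- the anti-range S⁻ of S in F -/
def arng (F : AF) (S : Set ℕ) : Set ℕ :=
  S ∪ {a | ∃ s ∈ S, (a, s) ∈ F.att}

/-- a is defended by S in F -/
def defends (F : AF) (S : Set ℕ) (a : ℕ) : Prop :=
  ∀ b, (b, a) ∈ F.att → ∃ s ∈ S, (s, b) ∈ F.att

def setDefends (F : AF) (S T : Set ℕ) : Prop := ∀ a ∈ T, F.defends S a

def admissible (F : AF) (S : Set ℕ) : Prop := F.cf S ∧ ∀ a ∈ S, F.defends S a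

def complete (F : AF) (S : Set ℕ) : Prop :=
  F.admissible S ∧ ∀ a ∈ (F.args : Set ℕ), F.defends S a → a ∈ S

def grounded (F : AF) (S : Set ℕ) : Prop :=
  F.complete S ∧ ∀ T, F.complete T → S ⊆ T

def naive (F : AF) (S : Set ℕ) : Prop :=
  F.cf S ∧ ∀ T, F.cf T → S ⊆ T → S = T

def stable (F : AF) (S : Set ℕ) : Prop := F.cf S ∧ F.rng S = ↑F.args

def stage (F : AF) (S : Set ℕ) : Prop :=
  F.cf S ∧ ∀ T, F.cf T → F.rng S ⊆ F.rng T → F.rng S = F.rng T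

/-- strongly admissible sets (recursive definition) -/
inductive sad (F : AF) : Set ℕ → Prop where
  | intro (S : Set ℕ) (hsub : S ⊆ ↑F.args) (w : ℕ → Set ℕ)
      (hw1 : ∀ a ∈ S, w a ⊆ S \ {a})
      (hw2 : ∀ a ∈ S, sad F (w a))
      (hw3 : ∀ a ∈ S, F.defends (w a) a) : sad F S

/-- self-attacking arguments -/
def loops (F : AF) : Set ℕ := {a | (a, a) ∈ F.att}

/-- naive kernel -/
def naiveKernel (F : AF) : AF :=
  ⟨F.args,
   F.att ∪ (F.args ×ˢ F.args).filter
     (fun p => p.1 ≠ p.2 ∧ ((p.1, p.1) ∈ F.att ∨ (p.2, p.1) ∈ F.att ∨ (p.2, p.2) ∈ F.att)),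
   Finset.union_subset F.att_sub (Finset.filter_subset _ _)⟩

/-- stable kernel -/
def stbKernel (F : AF) : AF :=
  ⟨F.args, F.att.filter (fun p => ¬ (p.1 ≠ p.2 ∧ (p.1, p.1) ∈ F.att)),
   (Finset.filter_subset _ _).trans F.att_sub⟩

/-- grounded kernel -/
def grKernel (F : AF) : AF :=
  ⟨F.args,
   F.att.filter (fun p => ¬ (p.1 ≠ p.2 ∧ (p.2, p.2) ∈ F.att ∧ ((p.1, p.1) ∈ F.att ∨ (p.2, p.1) ∈ F.att))),
   (Finset.filter_subset _ _).trans F.att_sub⟩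

/-- F^l : remove attacks between distinct self-attacking arguments -/
def loopKernel (F : AF) : AF :=
  ⟨F.args,
   F.att.filter (fun p => ¬ (p.1 ≠ p.2 ∧ (p.1, p.1) ∈ F.att ∧ (p.2, p.2) ∈ F.att)),
   (Finset.filter_subset _ _).trans F.att_sub⟩

/-- union of AFs -/
def union (F G : AF) : AF :=
  ⟨F.args ∪ G.args, F.att ∪ G.att,
   Finset.union_subset
     (F.att_sub.trans (Finset.product_subset_product Finset.subset_union_left Finset.subset_union_left))
     (G.att_sub.trans (Finset.product_subset_product Finset.subset_union_right Finset.subset_union_right))⟩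

end AF

/-!
Strong admissibility is blind to the attacks removed by the grounded kernel, and the kernel of
`F ∪ H` only depends on the kernel of `F`; this gives one direction. Conversely, expansions are used
as probes: a fresh argument `z` attacking all arguments but a chosen few makes `{b, z}` strongly
admissible exactly when `b` is present and has no attacker among the chosen ones, and a further
fresh `c` attacked only by `b` detects an attack `a → b` into a self-attacking `b`. These probes
recover the arguments, the self-loops and precisely the attacks kept in the grounded kernel.
-/

namespace AF

theorem ext_of_args_att {F G : AF} (hargs : F.args = G.args) (hatt : F.att = G.att) : F = G := by
  cases F; cases G; cases hargs; cases hatt; rfl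

theorem fst_mem_args_of_mem_att {F : AF} {a b : ℕ} (h : (a, b) ∈ F.att) : a ∈ F.args :=
  (Finset.mem_product.1 (F.att_sub h)).1

theorem snd_mem_args_of_mem_att {F : AF} {a b : ℕ} (h : (a, b) ∈ F.att) : b ∈ F.args :=
  (Finset.mem_product.1 (F.att_sub h)).2

@[simp] theorem union_args (F H : AF) : (F.union H).args = F.args ∪ H.args := rfl

@[simp] theorem union_att (F H : AF) : (F.union H).att = F.att ∪ H.att := rfl

@[simp] theorem grKernel_args (F : AF) : F.grKernel.args = F.args := rfl

theorem mem_grKernel_att {F : AF} {a b : ℕ} :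
    (a, b) ∈ F.grKernel.att ↔
      (a, b) ∈ F.att ∧ ¬ (a ≠ b ∧ (b, b) ∈ F.att ∧ ((a, a) ∈ F.att ∨ (b, a) ∈ F.att)) :=
  Finset.mem_filter

theorem mem_grKernel_att_iff {F : AF} {a b : ℕ} :
    (a, b) ∈ F.grKernel.att ↔
      (a, b) ∈ F.att ∧ (a = b ∨ (b, b) ∉ F.att ∨ ((a, a) ∉ F.att ∧ (b, a) ∉ F.att)) := by
  rw [mem_grKernel_att]
  tauto

theorem grKernel_att_subset (F : AF) : F.grKernel.att ⊆ F.att :=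
  Finset.filter_subset _ _

@[simp] theorem loop_mem_grKernel_att {F : AF} {a : ℕ} :
    (a, a) ∈ F.grKernel.att ↔ (a, a) ∈ F.att := by
  simp [mem_grKernel_att]

theorem mem_grKernel_att_of_not_loop {F : AF} {a b : ℕ} (h : (b, a) ∈ F.att)
    (ha : (a, a) ∉ F.att) : (b, a) ∈ F.grKernel.att :=
  mem_grKernel_att.2 ⟨h, fun h' => ha h'.2.1⟩

theorem sad_iff {F : AF} {S : Set ℕ} :
    F.sad S ↔ S ⊆ F.args ∧ ∀ a ∈ S, ∃ W ⊆ S \ {a}, F.sad W ∧ F.defends W a := by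
  constructor
  · rintro ⟨_, hsub, w, hw1, hw2, hw3⟩
    exact ⟨hsub, fun a ha => ⟨w a, hw1 a ha, hw2 a ha, hw3 a ha⟩⟩
  · rintro ⟨hsub, h⟩
    choose! w hw1 hw2 hw3 using h
    exact sad.intro S hsub w hw1 hw2 hw3

theorem sad.subset_args {F : AF} {S : Set ℕ} (h : F.sad S) : S ⊆ F.args :=
  (sad_iff.1 h).1

theorem sad.exists_counterattack {F : AF} {S : Set ℕ} (h : F.sad S) {a x : ℕ} (ha : a ∈ S)
    (hx : (x, a) ∈ F.att) : ∃ s ∈ S, s ≠ a ∧ (s, x) ∈ F.att := by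
  obtain ⟨W, hW, -, hd⟩ := (sad_iff.1 h).2 a ha
  obtain ⟨s, hs, hsx⟩ := hd x hx
  exact ⟨s, (hW hs).1, (hW hs).2, hsx⟩

/-- An attack `x → a` is countered by some `t` in the witness set of `a`, and `t` in turn by some
`u` in the witness set of `x`; the induction hypothesis for the witness set of `a` forbids this. -/
theorem sad.not_attacks {F : AF} {S R : Set ℕ} (hS : F.sad S) (hR : F.sad R) {a x : ℕ}
    (ha : a ∈ S) (hx : x ∈ R) : (x, a) ∉ F.att := by
  induction hS generalizing R a x with
  | intro S _ w hw1 _ hw3 ih =>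
    intro hxa
    obtain ⟨t, ht, htx⟩ := hw3 a ha x hxa
    obtain ⟨V, -, hV, hVd⟩ := (sad_iff.1 hR).2 x hx
    obtain ⟨u, hu, hut⟩ := hVd t htx
    exact ih a ha hV ht hu hut

theorem sad.not_loop {F : AF} {S : Set ℕ} (h : F.sad S) {a : ℕ} (ha : a ∈ S) :
    (a, a) ∉ F.att :=
  h.not_attacks h ha ha

theorem sad_empty (F : AF) : F.sad ∅ :=
  sad_iff.2 ⟨Set.empty_subset _, fun _ h => h.elim⟩

theorem sad_insert {F : AF} {W : Set ℕ} {a : ℕ} (hW : F.sad W) (ha : a ∈ F.args) (haW : a ∉ W)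
    (hd : F.defends W a) : F.sad (insert a W) := by
  obtain ⟨hsub, hdef⟩ := sad_iff.1 hW
  refine sad_iff.2 ⟨Set.insert_subset ha hsub, ?_⟩
  rintro x (rfl | hx)
  · exact ⟨W, Set.subset_sdiff_singleton (Set.subset_insert _ _) haW, hW, hd⟩
  · obtain ⟨V, hV, hVs, hVd⟩ := hdef x hx
    exact ⟨V, hV.trans (Set.sdiff_subset_sdiff_left (Set.subset_insert _ _)), hVs, hVd⟩

theorem sad_singleton {F : AF} {z : ℕ} (hz : z ∈ F.args) (hun : ∀ x, (x, z) ∉ F.att) :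
    F.sad {z} := by
  simpa using sad_insert (sad_empty F) hz (Set.notMem_empty z) fun x hx => (hun x hx).elim

theorem sad.exists_grKernel_att {F : AF} {W : Set ℕ} (hW : F.sad W) {s b : ℕ} (hs : s ∈ W)
    (hsb : (s, b) ∈ F.att) : ∃ t ∈ W, (t, b) ∈ F.grKernel.att := by
  induction hW generalizing s with
  | intro W hsub w hw1 hw2 hw3 ih =>
    by_cases hk : (s, b) ∈ F.grKernel.att
    · exact ⟨s, hs, hk⟩
    -- the attack was removed although `s` has no loop, so `b` attacks `s` and `w s` counters it
    have hbs : (b, s) ∈ F.att := by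
      have hs' := (sad.intro W hsub w hw1 hw2 hw3).not_loop hs
      rw [mem_grKernel_att] at hk
      tauto
    obtain ⟨t, ht, htb⟩ := hw3 s hs b hbs
    obtain ⟨t', ht', hk'⟩ := ih s hs ht htb
    exact ⟨t', (hw1 s hs ht').1, hk'⟩

theorem sad_grKernel_of_sad {F : AF} {S : Set ℕ} (h : F.sad S) : F.grKernel.sad S := by
  induction h with
  | intro S hsub w hw1 hw2 hw3 ih =>
    refine sad.intro S hsub w hw1 ih fun a ha b hba => ?_
    obtain ⟨s, hs, hsb⟩ := hw3 a ha b (F.grKernel_att_subset hba)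
    exact (hw2 a ha).exists_grKernel_att hs hsb

theorem sad_of_sad_grKernel {F : AF} {S : Set ℕ} (h : F.grKernel.sad S) : F.sad S := by
  induction h with
  | intro S hsub w hw1 hw2 hw3 ih =>
    refine sad.intro S hsub w hw1 ih fun a ha b hba => ?_
    have ha' : (a, a) ∉ F.att := by
      simpa using (sad.intro S hsub w hw1 hw2 hw3).not_loop ha
    obtain ⟨s, hs, hsb⟩ := hw3 a ha b (mem_grKernel_att_of_not_loop hba ha')
    exact ⟨s, hs, F.grKernel_att_subset hsb⟩

theorem sad_grKernel_iff {F : AF} {S : Set ℕ} : F.grKernel.sad S ↔ F.sad S :=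
  ⟨sad_of_sad_grKernel, sad_grKernel_of_sad⟩

/-- An attack `(b, a)` of `F` missing from `F.grKernel` forces `(a, a) ∈ F.att`, so both sides
remove the same attacks. -/
theorem grKernel_union_grKernel (F H : AF) :
    (F.grKernel.union H).grKernel = (F.union H).grKernel := by
  refine ext_of_args_att rfl (Finset.ext fun ⟨a, b⟩ => ?_)
  simp only [mem_grKernel_att, union_att, Finset.mem_union]
  grind

theorem grKernel_union_eq_of_grKernel_eq {F G : AF} (h : F.grKernel = G.grKernel) (H : AF) :
    (F.union H).grKernel = (G.union H).grKernel := by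
  rw [← grKernel_union_grKernel, h, grKernel_union_grKernel]

def star (z : ℕ) (A Y : Finset ℕ) : AF :=
  ⟨insert z (A ∪ Y), {z} ×ˢ Y,
   Finset.product_subset_product (by simp)
     (Finset.subset_union_right.trans (Finset.subset_insert _ _))⟩

def edge (b c : ℕ) : AF :=
  ⟨{b, c}, {(b, c)}, by simp⟩

@[simp] theorem star_args (z : ℕ) (A Y : Finset ℕ) : (star z A Y).args = insert z (A ∪ Y) := rfl

@[simp] theorem mem_star_att {z x y : ℕ} {A Y : Finset ℕ} :
    (x, y) ∈ (star z A Y).att ↔ x = z ∧ y ∈ Y := by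
  simp [star, and_comm, eq_comm]

@[simp] theorem edge_args (b c : ℕ) : (edge b c).args = {b, c} := rfl

@[simp] theorem mem_edge_att {b c x y : ℕ} : (x, y) ∈ (edge b c).att ↔ x = b ∧ y = c := by
  simp [edge]

theorem sad_union_star_singleton {K : AF} {z : ℕ} {A Y : Finset ℕ} (hzK : z ∉ K.args)
    (hzY : z ∉ Y) : (K.union (star z A Y)).sad {z} := by
  refine sad_singleton (by simp) fun x hx => ?_
  simp only [union_att, Finset.mem_union, mem_star_att] at hx
  exact hx.elim (fun h => hzK (snd_mem_args_of_mem_att h)) fun h => hzY h.2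

theorem sad_union_star_pair_iff {K : AF} {U T A : Finset ℕ} {b z : ℕ} (hK : K.args ⊆ U)
    (hT : T ⊆ U) (hz : z ∉ U) (hb : b ∈ T) :
    (K.union (star z A (U \ T))).sad {b, z} ↔ b ∈ K.args ∪ A ∧ ∀ t ∈ T, (t, b) ∉ K.att := by
  have hzK : z ∉ K.args := fun h => hz (hK h)
  have hbz : b ≠ z := fun h => hz (h ▸ hT hb)
  constructor
  · intro h
    refine ⟨?_, fun t ht htb => ?_⟩
    · have := h.subset_args (Set.mem_insert b _)
      simp only [union_args, star_args, Finset.coe_union, Finset.coe_insert, Set.mem_union,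
        Set.mem_insert_iff, Finset.mem_coe, Finset.mem_sdiff] at this
      simp only [Finset.mem_union]
      tauto
    · obtain ⟨s, hs, hsb, hst⟩ :=
        h.exists_counterattack (Set.mem_insert b _) (Finset.mem_union_left _ htb)
      obtain rfl : s = z := by simpa [hsb] using hs
      simp only [union_att, Finset.mem_union, mem_star_att, Finset.mem_sdiff] at hst
      exact hst.elim (fun h => hzK (fst_mem_args_of_mem_att h)) fun h => h.2.2 ht
  · rintro ⟨hbK, hbT⟩
    refine sad_insert (sad_union_star_singleton hzK (by simp [hz])) (by simp_all) hbz ?_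
    intro x hx
    simp only [union_att, Finset.mem_union, mem_star_att, Finset.mem_sdiff] at hx
    refine ⟨z, rfl, ?_⟩
    rcases hx with hx | hx
    · have hxT : x ∉ T := fun h => hbT x h hx
      simp [hxT, hK (fst_mem_args_of_mem_att hx)]
    · exact absurd hb hx.2.2

/-- `c` is attacked only by `b`, so defending it needs the attack `a → b`; `z` counters every other
attacker of `a`. -/
theorem sad_union_edge_star_triple_iff {K : AF} {U : Finset ℕ} {a b c z : ℕ} (hK : K.args ⊆ U)
    (ha : a ∈ U) (hb : b ∈ U) (hz : z ∉ U) (hc : c ∉ insert z U) (hab : a ≠ b) :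
    (K.union ((edge b c).union (star z ∅ (U \ {a, b})))).sad {c, a, z} ↔
      (a, b) ∈ K.att ∧ (a, a) ∉ K.att ∧ (b, a) ∉ K.att := by
  set L := K.union ((edge b c).union (star z ∅ (U \ {a, b})))
  have hatt : ∀ x y, (x, y) ∈ L.att ↔
      (x, y) ∈ K.att ∨ (x = b ∧ y = c) ∨ (x = z ∧ y ∈ U ∧ y ≠ a ∧ y ≠ b) := by
    simp [L]
  have hzK : ∀ x, (z, x) ∉ K.att ∧ (x, z) ∉ K.att := fun x =>
    ⟨fun h => hz (hK (fst_mem_args_of_mem_att h)), fun h => hz (hK (snd_mem_args_of_mem_att h))⟩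
  have hcK : ∀ x, (c, x) ∉ K.att ∧ (x, c) ∉ K.att := fun x =>
    ⟨fun h => hc (by simp [hK (fst_mem_args_of_mem_att h)]),
     fun h => hc (by simp [hK (snd_mem_args_of_mem_att h)])⟩
  simp only [Finset.mem_insert, not_or] at hc
  have hza : z ≠ a := fun h => hz (h ▸ ha)
  have hca : c ≠ a := fun h => hc.2 (h ▸ ha)
  constructor
  · intro h
    have hcS : c ∈ ({c, a, z} : Set ℕ) := by simp
    have haS : a ∈ ({c, a, z} : Set ℕ) := by simp
    obtain ⟨s, hs, hsc, hsb⟩ := h.exists_counterattack hcS ((hatt b c).2 (by simp))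
    refine ⟨?_, fun haa => h.not_loop haS ((hatt a a).2 (.inl haa)), fun hba => ?_⟩
    · simp only [Set.mem_insert_iff, Set.mem_singleton_iff] at hs
      grind
    · obtain ⟨s, hs, hsa, hsb⟩ := h.exists_counterattack haS ((hatt b a).2 (.inl hba))
      simp only [Set.mem_insert_iff, Set.mem_singleton_iff] at hs
      grind
  · rintro ⟨hab', haa, hba⟩
    have hsz : L.sad {z} := sad_singleton (by simp [L]) fun x hx => by grind
    have hsaz : L.sad {a, z} := by
      refine sad_insert hsz (by simp [L, fst_mem_args_of_mem_att hab']) (by simpa using hza.symm)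
        fun x hx => ⟨z, rfl, (hatt z x).2 ?_⟩
      rcases (hatt x a).1 hx with hxK | ⟨-, rfl⟩ | ⟨-, -, h, -⟩
      · have hxa : x ≠ a := by rintro rfl; exact haa hxK
        have hxb : x ≠ b := by rintro rfl; exact hba hxK
        exact .inr (.inr ⟨rfl, hK (fst_mem_args_of_mem_att hxK), hxa, hxb⟩)
      · exact absurd rfl hca
      · exact absurd rfl h
    refine sad_insert hsaz (by simp [L]) (by simp [hca, hc.1]) fun x hx => ⟨a, by simp, ?_⟩
    rcases (hatt x c).1 hx with hxK | ⟨rfl, -⟩ | ⟨-, h, -⟩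
    · exact absurd hxK (hcK x).2
    · exact (hatt a x).2 (.inl hab')
    · exact absurd h hc.2

def ExpansionEquivSad (F G : AF) : Prop :=
  ∀ H S, (F.union H).sad S ↔ (G.union H).sad S

theorem expansionEquivSad_of_grKernel_eq {F G : AF} (h : F.grKernel = G.grKernel) :
    ExpansionEquivSad F G := fun H S => by
  rw [← sad_grKernel_iff, grKernel_union_eq_of_grKernel_eq h, sad_grKernel_iff]

namespace ExpansionEquivSad

variable {F G : AF}

theorem unattacked_iff (h : ExpansionEquivSad F G) {A T : Finset ℕ} {b : ℕ} (hb : b ∈ T) :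
    (b ∈ F.args ∪ A ∧ ∀ t ∈ T, (t, b) ∉ F.att) ↔ (b ∈ G.args ∪ A ∧ ∀ t ∈ T, (t, b) ∉ G.att) := by
  obtain ⟨z, hz⟩ := Infinite.exists_notMem_finset (F.args ∪ G.args ∪ T)
  have hT : T ⊆ F.args ∪ G.args ∪ T := Finset.subset_union_right
  rw [← sad_union_star_pair_iff (Finset.subset_union_left.trans Finset.subset_union_left) hT hz hb,
    ← sad_union_star_pair_iff (Finset.subset_union_right.trans Finset.subset_union_left) hT hz hb]
  exact h _ _

theorem loop_iff (h : ExpansionEquivSad F G) (a : ℕ) : (a, a) ∈ F.att ↔ (a, a) ∈ G.att := by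
  simpa using (h.unattacked_iff (A := {a}) (Finset.mem_singleton_self a)).not

theorem mem_args_iff (h : ExpansionEquivSad F G) (a : ℕ) : a ∈ F.args ↔ a ∈ G.args := by
  by_cases hF : (a, a) ∈ F.att
  · exact iff_of_true (fst_mem_args_of_mem_att hF) (fst_mem_args_of_mem_att ((h.loop_iff a).1 hF))
  · have hG : (a, a) ∉ G.att := (h.loop_iff a).not.1 hF
    simpa [hF, hG] using h.unattacked_iff (A := ∅) (Finset.mem_singleton_self a)

theorem mem_att_and_not_loop_iff (h : ExpansionEquivSad F G) (a b : ℕ) :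
    (a, b) ∈ F.att ∧ (b, b) ∉ F.att ↔ (a, b) ∈ G.att ∧ (b, b) ∉ G.att := by
  have := h.unattacked_iff (A := {b}) (T := {a, b}) (b := b) (by simp)
  have hb := h.loop_iff b
  simp only [Finset.mem_union, Finset.mem_singleton, or_true, true_and, Finset.mem_insert,
    forall_eq_or_imp, forall_eq] at this
  tauto

theorem mem_att_and_not_mem_att_iff (h : ExpansionEquivSad F G) {a b : ℕ} (hab : a ≠ b) :
    (a, b) ∈ F.att ∧ (a, a) ∉ F.att ∧ (b, a) ∉ F.att ↔
      (a, b) ∈ G.att ∧ (a, a) ∉ G.att ∧ (b, a) ∉ G.att := by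
  set U := F.args ∪ G.args ∪ {a, b}
  obtain ⟨z, hz⟩ := Infinite.exists_notMem_finset U
  obtain ⟨c, hc⟩ := Infinite.exists_notMem_finset (insert z U)
  have ha : a ∈ U := by simp [U]
  have hb : b ∈ U := by simp [U]
  rw [← sad_union_edge_star_triple_iff (Finset.subset_union_left.trans Finset.subset_union_left)
      ha hb hz hc hab,
    ← sad_union_edge_star_triple_iff (Finset.subset_union_right.trans Finset.subset_union_left)
      ha hb hz hc hab]
  exact h _ _

theorem mem_grKernel_att_iff (h : ExpansionEquivSad F G) (a b : ℕ) :
    (a, b) ∈ F.grKernel.att ↔ (a, b) ∈ G.grKernel.att := by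
  rcases eq_or_ne a b with rfl | hab
  · simpa using h.loop_iff a
  · have h₁ := h.mem_att_and_not_loop_iff a b
    have h₂ := h.mem_att_and_not_mem_att_iff hab
    simp only [AF.mem_grKernel_att_iff, hab, false_or]
    tauto

theorem grKernel_eq (h : ExpansionEquivSad F G) : F.grKernel = G.grKernel :=
  ext_of_args_att (Finset.ext h.mem_args_iff) (Finset.ext fun ⟨a, b⟩ => h.mem_grKernel_att_iff a b)

end ExpansionEquivSad

theorem expansionEquivSad_iff_grKernel_eq {F G : AF} :
    ExpansionEquivSad F G ↔ F.grKernel = G.grKernel :=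
  ⟨ExpansionEquivSad.grKernel_eq, expansionEquivSad_of_grKernel_eq⟩

end AF

theorem stmt10 (F G : AF) :
    (∀ H : AF, {S | (F.union H).sad S} = {S | (G.union H).sad S}) ↔
      F.grKernel = G.grKernel := by
  exact (forall_congr' fun _ => Set.ext_iff).trans AF.expansionEquivSad_iff_grKernel_eq
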